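/- With μ, ν σ-finite and joint density p as above, define k(y, B) = ∫_B p(x,y)/p_Y(y) dμ(x) for y with 0 < p_Y(y) < ∞, and k(y, B) = ∫_B p_X(x) dμ(x) otherwise, where p_X(x) = ∫ p(x,y) dν(y) and p_Y(y) = ∫ p(x,y) dμ(x). Then for all A ∈ ℰ_X and C ∈ ℰ_Y: ∫_C k(y, A) · p_Y(y) dν(y) = ∫_{A×C} p d(μ⊗ν). -/

import Mathlib

/-! Where `0 < p_Y(y) < ∞` the factor `p_Y(y)` cancels the normalisation in `k(y, A)`, and where
`p_Y(y) = 0` both `k(y, A) · p_Y(y)` and `∫_A p(x, y) dμ ≤ p_Y(y)` vanish. Since `p_Y` integrates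
to `1`, the remaining set `{p_Y = ∞}` is `ν`-null, so `k(y, A) · p_Y(y) = ∫_A p(x, y) dμ` for
`ν`-a.e. `y`, and Tonelli's theorem turns the integral of this over `C` into the mass of `A ×ˢ C`. -/

open MeasureTheory ENNReal

section

variable {α β : Type*} [MeasurableSpace α] [MeasurableSpace β] {μ : Measure α} {ν : Measure β}

theorem lintegral_div_const_mul_cancel (f : α → ℝ≥0∞) {c : ℝ≥0∞} (h0 : c ≠ 0) (htop : c ≠ ∞) :
    (∫⁻ x, f x / c ∂μ) * c = ∫⁻ x, f x ∂μ := by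
  simp_rw [div_eq_mul_inv]
  rw [lintegral_mul_const' _ _ (inv_ne_top.mpr h0), mul_assoc, ENNReal.inv_mul_cancel h0 htop,
    mul_one]

theorem ite_setLIntegral_div_mul_lintegral {f : α → ℝ≥0∞} (hf : ∫⁻ x, f x ∂μ ≠ ∞)
    (A : Set α) (d : ℝ≥0∞) :
    (if 0 < ∫⁻ x, f x ∂μ ∧ ∫⁻ x, f x ∂μ < ∞ then ∫⁻ x in A, f x / ∫⁻ x, f x ∂μ ∂μ else d) *
      ∫⁻ x, f x ∂μ = ∫⁻ x in A, f x ∂μ := by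
  by_cases h0 : ∫⁻ x, f x ∂μ = 0
  · have hA : ∫⁻ x in A, f x ∂μ = 0 := le_antisymm (h0 ▸ setLIntegral_le_lintegral A f) zero_le
    rw [h0, mul_zero, hA]
  · rw [if_pos ⟨pos_iff_ne_zero.mpr h0, hf.lt_top⟩]
    exact lintegral_div_const_mul_cancel f h0 hf

theorem ae_lintegral_prod_left_lt_top [SFinite μ] [SFinite ν] {f : α × β → ℝ≥0∞}
    (hf : Measurable f) (h : ∫⁻ z, f z ∂μ.prod ν ≠ ∞) : ∀ᵐ y ∂ν, ∫⁻ x, f (x, y) ∂μ < ∞ :=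
  ae_lt_top hf.lintegral_prod_left' (by rwa [← lintegral_prod_symm' f hf])

end

theorem conditional_density_disintegration_general
    {EX EY : Type*} [MeasurableSpace EX] [MeasurableSpace EY]
    (μ : Measure EX) (ν : Measure EY) [SigmaFinite μ] [SigmaFinite ν]
    (p : EX × EY → ℝ≥0∞) (hp_meas : Measurable p)
    (hp_prob : ∫⁻ z, p z ∂(μ.prod ν) = 1)
    (pX : EX → ℝ≥0∞)
    (pY : EY → ℝ≥0∞) (hpY : ∀ y, pY y = ∫⁻ x, p (x, y) ∂μ)
    (k : EY → Set EX → ℝ≥0∞)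
    (hk : ∀ y B, k y B =
      if 0 < pY y ∧ pY y < ∞ then ∫⁻ x in B, p (x, y) / pY y ∂μ
      else ∫⁻ x in B, pX x ∂μ) :
    ∀ A : Set EX, MeasurableSet A → ∀ C : Set EY, MeasurableSet C →
      ∫⁻ y in C, k y A * pY y ∂ν = ∫⁻ z in A ×ˢ C, p z ∂(μ.prod ν) := by
  intro A _ C _
  have hpY_fin : ∀ᵐ y ∂ν, ∫⁻ x, p (x, y) ∂μ < ∞ :=
    ae_lintegral_prod_left_lt_top hp_meas (hp_prob ▸ one_ne_top)
  calc ∫⁻ y in C, k y A * pY y ∂ν = ∫⁻ y in C, ∫⁻ x in A, p (x, y) ∂μ ∂ν := by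
        refine lintegral_congr_ae (ae_restrict_of_ae ?_)
        filter_upwards [hpY_fin] with y hy
        rw [hk, hpY]
        exact ite_setLIntegral_div_mul_lintegral hy.ne A _
    _ = ∫⁻ z in A ×ˢ C, p z ∂(μ.prod ν) := (setLIntegral_prod_symm p hp_meas.aemeasurable).symm

theorem conditional_density_disintegration
    {EX EY : Type*} [MeasurableSpace EX] [MeasurableSpace EY]
    (μ : Measure EX) (ν : Measure EY) [SigmaFinite μ] [SigmaFinite ν]
    (p : EX × EY → ℝ≥0∞) (hp_meas : Measurable p) (hp_fin : ∀ z, p z < ∞)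
    (hp_prob : ∫⁻ z, p z ∂(μ.prod ν) = 1)
    (pX : EX → ℝ≥0∞) (hpX : ∀ x, pX x = ∫⁻ y, p (x, y) ∂ν)
    (pY : EY → ℝ≥0∞) (hpY : ∀ y, pY y = ∫⁻ x, p (x, y) ∂μ)
    (k : EY → Set EX → ℝ≥0∞)
    (hk : ∀ y B, k y B =
      if 0 < pY y ∧ pY y < ∞ then ∫⁻ x in B, p (x, y) / pY y ∂μ
      else ∫⁻ x in B, pX x ∂μ) :
    ∀ A : Set EX, MeasurableSet A → ∀ C : Set EY, MeasurableSet C →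
      ∫⁻ y in C, k y A * pY y ∂ν = ∫⁻ z in A ×ˢ C, p z ∂(μ.prod ν) :=
  conditional_density_disintegration_general μ ν p hp_meas hp_prob pX pY hpY k hk
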